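/- arXiv:math/0501525 — 4 statements merged into one kernel-verified Lean document; each statement's English description precedes it below -/
import Mathlib

section
/- If C is a linear order whose square C × C (with the coordinatewise partial order) is the union of countably many chains, then no uncountable linear order embeds into both C and the converse order C*. -/
/-!
If `g : L ↪o C` and `h : L ↪o Cᵒᵈ`, then `x ↦ (g x, h x)` maps `L` injectively onto an antichain
of `C × C`. An antichain meets each chain in at most one point, so it is countable when `C × C`
is a countable union of chains.
-/

open OrderDual

theorem OrderEmbedding.eq_of_le_prod_orderDual {α β γ : Type*} [PartialOrder α] [Preorder β]
    [Preorder γ] (g : α ↪o β) (h : α ↪o γᵒᵈ) {x y : α}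
    (hxy : (g x, ofDual (h x)) ≤ (g y, ofDual (h y))) : x = y :=
  le_antisymm (g.le_iff_le.mp hxy.1) (h.le_iff_le.mp hxy.2)

theorem injective_comp_of_chain_fibers {P α β : Type*} [Preorder P] {f : P → β}
    (hf : ∀ p q, f p = f q → p ≤ q ∨ q ≤ p) {φ : α → P} (hφ : ∀ x y, φ x ≤ φ y → x = y) :
    Function.Injective (f ∘ φ) := fun x y hxy =>
  (hf _ _ hxy).elim (hφ x y) fun hyx => (hφ y x hyx).symm

/-- If `C` is a linear order whose square (with the coordinatewise order) is
the union of countably many chains, then no uncountable linear order embeds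
into both `C` and its converse `Cᵒᵈ`. -/
theorem stmt_0 (C : Type*) [LinearOrder C]
    (f : C × C → ℕ)
    (hf : ∀ p q : C × C, f p = f q → p ≤ q ∨ q ≤ p)
    (L : Type*) [LinearOrder L] (hL : ¬ Countable L) :
    ¬ (Nonempty (L ↪o C) ∧ Nonempty (L ↪o Cᵒᵈ)) := by
  rintro ⟨⟨g⟩, ⟨h⟩⟩
  exact hL (injective_comp_of_chain_fibers hf
    (φ := fun x => (g x, ofDual (h x))) fun _ _ => g.eq_of_le_prod_orderDual h).countable
end

section
/- Let T be a tree of binary sequences, Z ⊆ T, and K ⊆ T. Suppose t ∈ T is such that for all s ∈ Z incomparable with t, the meet s ∧ t is not in K. Let Y be the set of all w ∈ ∧(Z) such that whenever u, v ∈ Z are incomparable and u ∧ v ≤ w, then u ∧ v ∉ K. Then ∧(Y) is disjoint from K, where ∧(X) denotes the set of all meets of incomparable pairs from X. -/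
noncomputable section

/-- A binary sequence: an ordinal domain together with values (only values
below `dom` are meaningful). -/
structure PartFun where
  dom : Ordinal
  val : Ordinal → Bool

namespace PartFun

/-- Canonical form: the value is `false` outside of the domain. -/
def Normalized (s : PartFun) : Prop := ∀ ξ, s.dom ≤ ξ → s.val ξ = false

/-- The tree order: `t` end-extends `s`. -/
def Le (s t : PartFun) : Prop := s.dom ≤ t.dom ∧ ∀ ξ < s.dom, s.val ξ = t.val ξ

/-- `s` and `t` are incomparable in the tree order. -/
def Incomp (s t : PartFun) : Prop := ¬ Le s t ∧ ¬ Le t s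

/-- The set of places in the common domain where `s` and `t` differ. -/
def diffSet (s t : PartFun) : Set Ordinal :=
  {ξ | ξ < s.dom ∧ ξ < t.dom ∧ s.val ξ ≠ t.val ξ}

/-- `Δ(s,t)`: the least place where `s` and `t` differ. -/
def delta (s t : PartFun) : Ordinal := sInf (diffSet s t)

/-- The restriction `s↾γ` (in canonical form). -/
def restrict (s : PartFun) (γ : Ordinal) : PartFun :=
  ⟨min γ s.dom, fun ξ => if ξ < min γ s.dom then s.val ξ else false⟩

/-- The meet `s ∧ t` of two incomparable elements. -/
def meet (s t : PartFun) : PartFun := s.restrict (delta s t)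

end PartFun

/-- The first uncountable ordinal. -/
abbrev omega1 : Ordinal := (Cardinal.aleph 1).ord

/-- A tree of binary sequences of countable height: a set of (canonical) binary
sequences with countable domains, closed under restriction. -/
def IsTree (T : Set PartFun) : Prop :=
  (∀ s ∈ T, s.Normalized ∧ s.dom < omega1) ∧ ∀ s ∈ T, ∀ γ, s.restrict γ ∈ T

/-- Coherence: any two members differ at only finitely many places of the
common domain. -/
def Coherent (T : Set PartFun) : Prop :=
  ∀ s ∈ T, ∀ t ∈ T, (PartFun.diffSet s t).Finite

/-- `T` is closed under finite changes. -/
def ClosedUnderFiniteChanges (T : Set PartFun) : Prop :=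
  ∀ s ∈ T, ∀ t : PartFun, t.dom = s.dom → t.Normalized →
    (PartFun.diffSet s t).Finite → t ∈ T

/-- The `γ`-th level of `T`. -/
def Level (T : Set PartFun) (γ : Ordinal) : Set PartFun := {s ∈ T | s.dom = γ}

/-- An Aronszajn tree: a tree of height `ω₁` with countable levels and
no uncountable branches. -/
def IsAronszajn (T : Set PartFun) : Prop :=
  IsTree T ∧ (∀ γ < omega1, (Level T γ).Nonempty) ∧
    (∀ γ, (Level T γ).Countable) ∧
    ∀ B ⊆ T, (∀ s ∈ B, ∀ t ∈ B, PartFun.Le s t ∨ PartFun.Le t s) → B.Countable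

/-- The set of meets of incomparable pairs from `X`. -/
def meetSet (X : Set PartFun) : Set PartFun :=
  {w | ∃ s ∈ X, ∃ t ∈ X, PartFun.Incomp s t ∧ w = PartFun.meet s t}

namespace PartFun

variable {s t s' t' : PartFun} {ξ γ : Ordinal}

lemma incomp_of_mem_diffSet (h : ξ ∈ diffSet s t) : Incomp s t :=
  ⟨fun hle => h.2.2 (hle.2 ξ h.1), fun hle => h.2.2 (hle.2 ξ h.2.1).symm⟩

lemma Incomp.diffSet_nonempty (h : Incomp s t) : (diffSet s t).Nonempty := by
  rcases le_total s.dom t.dom with hd | hd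
  · obtain ⟨ξ, hξ, hne⟩ : ∃ ξ < s.dom, s.val ξ ≠ t.val ξ := by
      by_contra! H
      exact h.1 ⟨hd, H⟩
    exact ⟨ξ, hξ, hξ.trans_le hd, hne⟩
  · obtain ⟨ξ, hξ, hne⟩ : ∃ ξ < t.dom, t.val ξ ≠ s.val ξ := by
      by_contra! H
      exact h.2 ⟨hd, H⟩
    exact ⟨ξ, hξ.trans_le hd, hξ, hne.symm⟩

lemma Incomp.delta_mem (h : Incomp s t) : delta s t ∈ diffSet s t :=
  csInf_mem h.diffSet_nonempty

lemma delta_le (h : ξ ∈ diffSet s t) : delta s t ≤ ξ :=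
  csInf_le (OrderBot.bddBelow _) h

lemma diffSet_subset_diffSet (hs : Le s s') (ht : Le t t') : diffSet s t ⊆ diffSet s' t' :=
  fun ξ ⟨hξs, hξt, hne⟩ =>
    ⟨hξs.trans_le hs.1, hξt.trans_le ht.1, by rwa [← hs.2 ξ hξs, ← ht.2 ξ hξt]⟩

lemma Incomp.of_le (h : Incomp s t) (hs : Le s s') (ht : Le t t') : Incomp s' t' :=
  incomp_of_mem_diffSet (diffSet_subset_diffSet hs ht h.delta_mem)

lemma Incomp.delta_eq_of_le (h : Incomp s t) (hs : Le s s') (ht : Le t t') :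
    delta s' t' = delta s t := by
  obtain ⟨hδs, hδt, -⟩ := h.delta_mem
  refine le_antisymm (delta_le (diffSet_subset_diffSet hs ht h.delta_mem)) ?_
  by_contra! hlt
  obtain ⟨-, -, hne⟩ := (h.of_le hs ht).delta_mem
  have hmem : delta s' t' ∈ diffSet s t := by
    refine ⟨hlt.trans hδs, hlt.trans hδt, ?_⟩
    rwa [hs.2 _ (hlt.trans hδs), ht.2 _ (hlt.trans hδt)]
  exact (delta_le hmem).not_gt hlt

lemma restrict_le (s : PartFun) (γ : Ordinal) : Le (s.restrict γ) s :=
  ⟨min_le_right _ _, fun _ hξ => if_pos hξ⟩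

lemma meet_le (s t : PartFun) : Le (meet s t) s :=
  restrict_le _ _

lemma restrict_eq_of_le (h : Le s s') (hγ : γ ≤ s.dom) : s.restrict γ = s'.restrict γ := by
  have hγ' : γ ≤ s'.dom := hγ.trans h.1
  simp only [restrict, min_eq_left hγ, min_eq_left hγ', mk.injEq, true_and]
  funext ξ
  split_ifs with hξ
  · exact h.2 ξ (hξ.trans_le hγ)
  · rfl

lemma Incomp.meet_eq_of_le (h : Incomp s t) (hs : Le s s') (ht : Le t t') :
    meet s' t' = meet s t := by
  rw [meet, meet, h.delta_eq_of_le hs ht, restrict_eq_of_le hs h.delta_mem.1.le]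

end PartFun

theorem stmt_5_general (Z K : Set PartFun) :
    meetSet {w ∈ meetSet Z |
        ∀ u ∈ Z, ∀ v ∈ Z, PartFun.Incomp u v →
          PartFun.Le (PartFun.meet u v) w → PartFun.meet u v ∉ K}
      ∩ K = ∅ := by
  rw [Set.eq_empty_iff_forall_notMem]
  rintro _ ⟨⟨_, ⟨⟨u, hu, v, hv, -, rfl⟩, hbelow⟩, _, ⟨⟨u', hu', v', hv', -, rfl⟩, -⟩,
    hinc, rfl⟩, hK⟩
  -- The meet of `u ∧ v` and `u' ∧ v'` is `u ∧ u'`, which lies below `u ∧ v`.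
  have hmeet : PartFun.meet (PartFun.meet u v) (PartFun.meet u' v') = PartFun.meet u u' :=
    (hinc.meet_eq_of_le (PartFun.meet_le u v) (PartFun.meet_le u' v')).symm
  refine hbelow u hu u' hu' (hinc.of_le (PartFun.meet_le u v) (PartFun.meet_le u' v')) ?_
    (hmeet ▸ hK)
  exact hmeet ▸ PartFun.meet_le _ _

/-- Suppose `Z, K ⊆ T` and `t` is such that `s ∧ t ∉ K` for every `s ∈ Z`
incomparable with `t`.  If `Y` is the set of all `w ∈ ∧(Z)` such that every
meet `u ∧ v` (for incomparable `u,v ∈ Z`) lying below `w` is not in `K`,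
then `∧(Y)` is disjoint from `K`. -/
theorem stmt_5 (T : Set PartFun) (hT : IsTree T)
    (Z K : Set PartFun) (hZ : Z ⊆ T) (hK : K ⊆ T)
    (t : PartFun) (ht : t ∈ T)
    (hmeet : ∀ s ∈ Z, PartFun.Incomp s t → PartFun.meet s t ∉ K) :
    meetSet {w ∈ meetSet Z |
        ∀ u ∈ Z, ∀ v ∈ Z, PartFun.Incomp u v →
          PartFun.Le (PartFun.meet u v) w → PartFun.meet u v ∉ K}
      ∩ K = ∅ :=
  stmt_5_general Z K
end
end

section
/- Suppose ⟨X_ξ : ξ < ω₁⟩ is a sequence of pairwise disjoint n-element subsets of an Aronszajn tree T of binary sequences such that every element of X_ξ has height at least ξ. Then there exist a countable ordinal ζ and an uncountable set Ξ ⊆ ω₁ such that for all ξ, η ∈ Ξ and all j < n, X_ξ(j)↾ζ = X_η(j)↾ζ, and for all ξ ∈ Ξ, diff(X_ξ↾ξ) ⊆ ζ. -/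
noncomputable section

/-!
For a limit `ξ`, coherence makes `diff(X_ξ↾ξ)` a finite subset of `ξ`, hence bounded by some
`f ξ < ξ`. If every set `{ξ limit : f ξ ≤ ζ}` were countable, iterating countable bounds would
produce a limit `δ < ω₁` closed under them, and `δ` would lie in `{ξ : f ξ ≤ ζ}` for some `ζ < δ`
whose bound is below `δ`. So some countable `ζ` bounds `f ξ` for uncountably many limits `ξ`; as
`T` has countable levels, the tuples `X_ξ↾ζ` range over a countable set, and one of them occurs
uncountably often.
-/

open Cardinal Ordinal Order Set

theorem omega1_eq_omega_one : omega1 = ω₁ := ord_aleph 1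

theorem Set.Countable.exists_lt_omega_one_subset_Iio {s : Set Ordinal} (hs : s.Countable)
    (hlt : ∀ x ∈ s, x < ω₁) : ∃ b < ω₁, s ⊆ Iio b := by
  have := hs.to_subtype
  refine ⟨⨆ x : s, succ (x : Ordinal),
    iSup_lt_omega_one fun x => (isSuccLimit_omega 1).succ_lt (hlt x x.2), fun x hx => ?_⟩
  exact (lt_succ x).trans_le (Ordinal.le_iSup (fun x : s => succ (x : Ordinal)) ⟨x, hx⟩)

theorem countable_Iic_of_lt_omega_one {o : Ordinal} (ho : o < ω₁) : (Iic o).Countable := by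
  rw [← Iio_succ, ← le_aleph0_iff_set_countable, Cardinal.mk_Iio_ordinal, lift_le_aleph0,
    ← lt_aleph_one_iff, ← lt_omega_iff_card_lt]
  exact (isSuccLimit_omega 1).succ_lt ho

theorem Set.Finite.exists_lt_subset_Iio {α : Type*} [LinearOrder α] [OrderBot α] [SuccOrder α]
    {s : Set α} {a : α} (hs : s.Finite) (hsa : s ⊆ Iio a) (ha : IsSuccLimit a) :
    ∃ b < a, s ⊆ Iio b := by
  refine ⟨hs.toFinset.sup succ, ?_, fun x hx => ?_⟩
  · exact (Finset.sup_lt_iff ha.bot_lt).2 fun x hx => ha.succ_lt (hsa (hs.mem_toFinset.1 hx))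
  · exact (lt_succ_of_not_isMax (hsa hx).not_isMax).trans_le
      (Finset.le_sup (f := succ) (hs.mem_toFinset.2 hx))

theorem Set.exists_not_countable_fiber {α β : Type*} {s : Set α} {t : Set β} {g : α → β}
    (hs : ¬ s.Countable) (ht : t.Countable) (hg : MapsTo g s t) :
    ∃ y, ¬ {x ∈ s | g x = y}.Countable := by
  by_contra! h
  refine hs ((ht.biUnion fun y _ => h y).mono fun x hx => mem_biUnion (hg hx) ?_)
  exact show x ∈ {x' ∈ s | g x' = g x} from ⟨hx, rfl⟩

namespace Ordinal

theorem iterate_lt_omega_one {h : Ordinal → Ordinal} (hh : ∀ ζ < ω₁, h ζ < ω₁) {a : Ordinal}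
    (ha : a < ω₁) (n : ℕ) : h^[n] a < ω₁ := by
  induction n with
  | zero => exact ha
  | succ n ih => rw [Function.iterate_succ_apply']; exact hh _ ih

theorem nfp_lt_omega_one {h : Ordinal → Ordinal} (hh : ∀ ζ < ω₁, h ζ < ω₁) {a : Ordinal}
    (ha : a < ω₁) : nfp h a < ω₁ := by
  rw [← iSup_iterate_eq_nfp]
  exact iSup_lt_omega_one (iterate_lt_omega_one hh ha)

theorem isSuccLimit_nfp_of_lt_iterate {h : Ordinal → Ordinal} {a : Ordinal}
    (hinc : ∀ n, h^[n] a < h^[n + 1] a) : IsSuccLimit (nfp h a) := by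
  by_contra hlim
  rw [← iSup_iterate_eq_nfp] at hlim
  obtain ⟨n, hn⟩ := exists_eq_ciSup_of_not_isSuccLimit bddAbove_of_small hlim
  rw [iSup_iterate_eq_nfp] at hn
  exact (hinc n).not_ge (hn ▸ iterate_le_nfp h a (n + 1))

theorem exists_not_countable_setOf_le_of_regressive (f : Ordinal → Ordinal)
    (hf : ∀ ξ < ω₁, IsSuccLimit ξ → f ξ < ξ) :
    ∃ ζ < ω₁, ¬ {ξ | ξ < ω₁ ∧ IsSuccLimit ξ ∧ f ξ ≤ ζ}.Countable := by
  by_contra! hS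
  have hbound : ∀ ζ < ω₁, ∃ b < ω₁,
      insert ζ {ξ | ξ < ω₁ ∧ IsSuccLimit ξ ∧ f ξ ≤ ζ} ⊆ Iio b := fun ζ hζ =>
    ((hS ζ hζ).insert ζ).exists_lt_omega_one_subset_Iio (by rintro x (rfl | hx); exacts [hζ, hx.1])
  choose! h hh hsub using hbound
  have hit := iterate_lt_omega_one hh (omega_pos 1)
  have hδ : nfp h 0 < ω₁ := nfp_lt_omega_one hh (omega_pos 1)
  have hlim : IsSuccLimit (nfp h 0) := isSuccLimit_nfp_of_lt_iterate fun n => by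
    rw [Function.iterate_succ_apply']
    exact hsub _ (hit n) (mem_insert _ _)
  obtain ⟨n, hn⟩ := lt_nfp_iff.1 (hf _ hδ hlim)
  have hlt : nfp h 0 < h^[n + 1] 0 := by
    rw [Function.iterate_succ_apply']
    exact hsub _ (hit n) (Or.inr ⟨hδ, hlim, hn.le⟩)
  exact hlt.not_ge (iterate_le_nfp h 0 (n + 1))

end Ordinal

namespace PartFun

/-- The paper's `diff(F)`. -/
def diffFamily {ι : Type*} (x : ι → PartFun) : Set Ordinal := ⋃ i, ⋃ j, diffSet (x i) (x j)

theorem diffFamily_restrict_subset_Iio {ι : Type*} (x : ι → PartFun) (γ : Ordinal) :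
    diffFamily (fun i => (x i).restrict γ) ⊆ Iio γ := by
  intro o ho
  obtain ⟨i, j, hij⟩ := mem_iUnion₂.1 ho
  exact hij.1.trans_le (min_le_left _ _)

end PartFun

open PartFun

theorem Coherent.finite_diffFamily {T : Set PartFun} (hT : Coherent T) {ι : Type*} [Finite ι]
    {x : ι → PartFun} (hx : ∀ i, x i ∈ T) : (diffFamily x).Finite :=
  finite_iUnion fun i => finite_iUnion fun j => hT _ (hx i) _ (hx j)

theorem countable_setOf_mem_dom_le {T : Set PartFun} (hlev : ∀ γ, (Level T γ).Countable)
    {ζ : Ordinal} (hζ : ζ < ω₁) : {s ∈ T | s.dom ≤ ζ}.Countable :=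
  ((countable_Iic_of_lt_omega_one hζ).biUnion fun γ _ => hlev γ).mono fun s hs =>
    mem_biUnion hs.2 (show s ∈ Level T s.dom from ⟨hs.1, rfl⟩)

theorem stmt_8_general (T : Set PartFun) (hA : IsAronszajn T) (hcoh : Coherent T)
    (n : ℕ) (X : Ordinal → Fin n → PartFun)
    (hmem : ∀ ξ < omega1, ∀ j : Fin n, X ξ j ∈ T) :
    ∃ ζ < omega1, ∃ Ξ : Set Ordinal, Ξ ⊆ Set.Iio omega1 ∧ ¬ Ξ.Countable ∧
      (∀ ξ ∈ Ξ, ∀ η ∈ Ξ, ∀ j : Fin n,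
        (X ξ j).restrict ζ = (X η j).restrict ζ) ∧
      (∀ ξ ∈ Ξ, ∀ j j' : Fin n,
        ∀ o ∈ PartFun.diffSet ((X ξ j).restrict ξ) ((X ξ j').restrict ξ),
          o < ζ) := by
  rw [omega1_eq_omega_one] at hmem ⊢
  have hbound : ∀ ξ < ω₁, IsSuccLimit ξ →
      ∃ b < ξ, diffFamily (fun j => (X ξ j).restrict ξ) ⊆ Iio b := fun ξ hξ hlim =>
    (hcoh.finite_diffFamily fun j => hA.1.2 _ (hmem ξ hξ j) ξ).exists_lt_subset_Iio
      (diffFamily_restrict_subset_Iio _ _) hlim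
  choose! f hf hfD using hbound
  obtain ⟨ζ, hζ, hS⟩ := exists_not_countable_setOf_le_of_regressive f hf
  obtain ⟨v, hv⟩ := exists_not_countable_fiber (g := fun ξ j => (X ξ j).restrict ζ) hS
    (countable_pi fun _ => countable_setOf_mem_dom_le hA.2.2.1 hζ)
    fun ξ hξ j => ⟨hA.1.2 _ (hmem ξ hξ.1 j) ζ, min_le_left _ _⟩
  refine ⟨ζ, hζ, _, fun ξ hξ => hξ.1.1, hv, fun ξ hξ η hη j => ?_, fun ξ hξ j j' o ho => ?_⟩
  · exact congrFun (hξ.2.trans hη.2.symm) j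
  · exact (hfD ξ hξ.1.1 hξ.1.2.1 (mem_iUnion₂.2 ⟨j, j', ho⟩)).trans_le hξ.1.2.2

/-- Given a sequence `⟨X_ξ : ξ < ω₁⟩` of pairwise disjoint `n`-element subsets
of a coherent Aronszajn tree `T` (each enumerated by `Fin n`) all of whose
elements have height at least `ξ`, there are a countable ordinal `ζ` and an
uncountable `Ξ ⊆ ω₁` such that `X_ξ(j)↾ζ = X_η(j)↾ζ` for all `ξ,η ∈ Ξ` and
`j < n`, and `diff(X_ξ↾ξ) ⊆ ζ` for all `ξ ∈ Ξ`. -/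
theorem stmt_8 (T : Set PartFun) (hA : IsAronszajn T) (hcoh : Coherent T)
    (n : ℕ) (X : Ordinal → Fin n → PartFun)
    (hmem : ∀ ξ < omega1, ∀ j : Fin n, X ξ j ∈ T)
    (hinj : ∀ ξ < omega1, Function.Injective (X ξ))
    (hdisj : ∀ ξ < omega1, ∀ η < omega1, ξ ≠ η →
      ∀ j j' : Fin n, X ξ j ≠ X η j')
    (hht : ∀ ξ < omega1, ∀ j : Fin n, ξ ≤ (X ξ j).dom) :
    ∃ ζ < omega1, ∃ Ξ : Set Ordinal, Ξ ⊆ Set.Iio omega1 ∧ ¬ Ξ.Countable ∧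
      (∀ ξ ∈ Ξ, ∀ η ∈ Ξ, ∀ j : Fin n,
        (X ξ j).restrict ζ = (X η j).restrict ζ) ∧
      (∀ ξ ∈ Ξ, ∀ j j' : Fin n,
        ∀ o ∈ PartFun.diffSet ((X ξ j).restrict ξ) ((X ξ j').restrict ξ),
          o < ζ) :=
  stmt_8_general T hA hcoh n X hmem
end
end

section
/- Assume CH. There is no basis of cardinality less than 2^{2^{ℵ₀}} for the class of uncountable separable linear orders; more precisely, given a set of reals X of cardinality continuum such that every continuous injective f ⊆ X² differs from the identity on a set of size less than continuum, any family of uncountable suborders of ℝ of size less than |P(ℝ)| fails to be a basis. -/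
/-!
An order embedding of an uncountable `Y` into two suborders `Z₁, Z₂` of the Sierpiński set `X`
composes to a strictly monotone map from a subset of `X` into `X`. Off its countably many
discontinuities it is a continuous injection, hence the identity off a countable set; its fixed
points lie in `Z₁ ∩ Z₂`, which is therefore uncountable.

Since `|X| = 𝔠`, the branches of the binary tree of height `ω₁` embed into `X` as `2^ℵ₁`
uncountable subsets with pairwise countable intersections. A basis must embed some member into
each of them, and no member embeds into two, so under CH a basis has at least `2^ℵ₁ = 2^𝔠`
members.
-/

open Cardinal Ordinal Set Function

theorem Function.Injective.countable_range_iff {α β : Type*} {f : α → β} (hf : Injective f) :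
    (range f).Countable ↔ Countable α := by
  refine ⟨fun h => countable_univ_iff.1 ?_, fun _ => countable_range f⟩
  exact countable_of_injective_of_countable_image hf.injOn (image_univ ▸ h)

/-- The exceptional sets are required to be countable rather than of size `< 𝔠`; under CH these
agree. -/
def IsSierpinskiSet (X : Set ℝ) : Prop :=
  ∀ S ⊆ X, ∀ g : ℝ → ℝ, ContinuousOn g S → InjOn g S → MapsTo g S X →
    {a ∈ S | g a ≠ a}.Countable

theorem isSierpinskiSet_of_continuum_eq_aleph_one (hCH : continuum.{0} = ℵ₁) {X : Set ℝ}
    (hX : ∀ S ⊆ X, ∀ g : ℝ → ℝ, ContinuousOn g S → InjOn g S → MapsTo g S X →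
      #{a ∈ S | g a ≠ a} < 𝔠) :
    IsSierpinskiSet X := fun S hS g hc hi hm =>
  le_aleph0_iff_set_countable.1 (lt_aleph_one_iff.1 (hCH ▸ hX S hS g hc hi hm))

namespace IsSierpinskiSet

variable {X : Set ℝ}

theorem not_countable_setOf_apply_eq (hX : IsSierpinskiSet X) {S : Set ℝ} {φ : ℝ → ℝ}
    (hSX : S ⊆ X) (hS : ¬ S.Countable) (hφ : StrictMonoOn φ S) (hφX : MapsTo φ S X) :
    ¬ {a ∈ S | φ a = a}.Countable := by
  set D := {a ∈ S | ¬ContinuousWithinAt φ S a}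
  have hD : D.Countable := hφ.monotoneOn.countable_not_continuousWithinAt
  have hcont : ContinuousOn φ (S \ D) := fun a ha =>
    (not_not.1 fun h => ha.2 ⟨ha.1, h⟩ : ContinuousWithinAt φ S a).mono sdiff_subset
  have hmoved := hX (S \ D) (sdiff_subset.trans hSX) φ hcont (hφ.injOn.mono sdiff_subset)
    (hφX.mono_left sdiff_subset)
  refine fun hfixed => hS (((hD.union hmoved).union hfixed).mono fun a ha => ?_)
  by_cases haD : a ∈ D
  · exact .inl (.inl haD)
  by_cases hfix : φ a = a
  · exact .inr ⟨ha, hfix⟩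
  · exact .inl (.inr ⟨⟨ha, haD⟩, hfix⟩)

theorem not_countable_inter_of_orderEmbedding (hX : IsSierpinskiSet X) {Y Z₁ Z₂ : Set ℝ}
    (hY : ¬ Y.Countable) (h₁ : Z₁ ⊆ X) (h₂ : Z₂ ⊆ X) (f : Y ↪o Z₁) (g : Y ↪o Z₂) :
    ¬ (Z₁ ∩ Z₂).Countable := by
  set f' : Y → ℝ := fun y => f y
  have hf' : Injective f' := Subtype.val_injective.comp f.injective
  set φ := extend f' (fun y => (g y : ℝ)) id
  have hφ : ∀ y, φ (f' y) = g y := hf'.extend_apply _ _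
  have hmono : StrictMonoOn φ (range f') := by
    rintro _ ⟨y₁, rfl⟩ _ ⟨y₂, rfl⟩ h
    rw [hφ, hφ]
    exact g.lt_iff_lt.2 (f.lt_iff_lt.1 h)
  have hfixed : {a ∈ range f' | φ a = a} ⊆ Z₁ ∩ Z₂ := by
    rintro _ ⟨⟨y, rfl⟩, hy⟩
    rw [hφ] at hy
    exact ⟨(f y).2, hy ▸ (g y).2⟩
  refine fun h => hX.not_countable_setOf_apply_eq ?_ ?_ hmono ?_ (h.mono hfixed)
  · exact range_subset_iff.2 fun y => h₁ (f y).2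
  · exact fun h => hY (countable_coe_iff.1 (hf'.countable_range_iff.1 h))
  · rintro _ ⟨y, rfl⟩
    exact hφ y ▸ h₂ (g y).2

end IsSierpinskiSet

theorem Ordinal.countable_Iic_omega_one (x : (ω₁).ToType) : (Iic x).Countable := by
  rw [← Iio_insert, countable_insert, ← le_aleph0_iff_set_countable, ← lt_aleph_one_iff]
  simpa using mk_Iio_lt x (by simp)

abbrev Omega1BinaryTree : Type := Σ x : (ω₁).ToType, (Iio x → Bool)

namespace Omega1BinaryTree

def branch (F : (ω₁).ToType → Bool) : Set Omega1BinaryTree :=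
  range fun x => ⟨x, fun y => F y⟩

theorem mk_le_continuum : #Omega1BinaryTree ≤ 𝔠 := by
  have hlevel (x : (ω₁).ToType) : #(Iio x → Bool) ≤ 𝔠 := by
    rw [← two_power_aleph0, mk_arrow, Cardinal.lift_id, Cardinal.lift_id, mk_bool]
    exact power_le_power_left two_ne_zero (le_aleph0_iff_set_countable.2
      ((countable_Iic_omega_one x).mono Iio_subset_Iic_self))
  calc #Omega1BinaryTree = sum fun x : (ω₁).ToType => #(Iio x → Bool) := mk_sigma _
    _ ≤ sum fun _ : (ω₁).ToType => 𝔠 := sum_le_sum _ _ hlevel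
    _ = 𝔠 := by
      rw [sum_const', mk_toType, card_omega]
      exact mul_eq_right aleph0_le_continuum aleph_one_le_continuum (aleph_pos 1).ne'

theorem not_countable_branch (F : (ω₁).ToType → Bool) : ¬ (branch F).Countable := by
  have hinj : Injective fun x : (ω₁).ToType => (⟨x, fun y => F y⟩ : Omega1BinaryTree) :=
    fun x y h => congrArg Sigma.fst h
  rw [branch, hinj.countable_range_iff, ← mk_le_aleph0_iff, mk_toType, card_omega, not_le]
  exact aleph0_lt_aleph_one

theorem countable_branch_inter_branch {F G : (ω₁).ToType → Bool} (hFG : F ≠ G) :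
    (branch F ∩ branch G).Countable := by
  obtain ⟨z, hz⟩ := ne_iff.1 hFG
  refine ((countable_Iic_omega_one z).image fun x => ⟨x, fun y => F y⟩).mono ?_
  rintro _ ⟨⟨x, rfl⟩, ⟨x', h⟩⟩
  obtain ⟨rfl, h⟩ := Sigma.mk.inj_iff.1 h
  refine ⟨x', (not_lt.1 fun hzx => hz ?_ : x' ≤ z), rfl⟩
  exact (congrFun (eq_of_heq h) ⟨z, hzx⟩).symm

end Omega1BinaryTree

theorem exists_almostDisjoint_family {α : Type*} {X : Set α} (hX : 𝔠 ≤ #X) :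
    ∃ A : ((ω₁ : Ordinal.{0}).ToType → Bool) → Set α,
      (∀ F, A F ⊆ X) ∧ (∀ F, ¬ (A F).Countable) ∧ Pairwise fun F G => (A F ∩ A G).Countable := by
  obtain ⟨e⟩ : Nonempty (Omega1BinaryTree ↪ X) := by
    rw [← lift_mk_le', Cardinal.lift_uzero]
    exact (lift_le.2 Omega1BinaryTree.mk_le_continuum).trans (by simpa using hX)
  have he : Injective fun t => (e t : α) := Subtype.val_injective.comp e.injective
  refine ⟨fun F => (fun t => (e t : α)) '' Omega1BinaryTree.branch F, ?_, ?_, ?_⟩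
  · exact fun F => image_subset_iff.2 fun t _ => (e t).2
  · exact fun F h => Omega1BinaryTree.not_countable_branch F
      (countable_of_injective_of_countable_image he.injOn h)
  · intro F G hFG
    rw [← image_inter he]
    exact (Omega1BinaryTree.countable_branch_inter_branch hFG).image _

/-- Under CH, there is no basis of cardinality less than `2^{2^{ℵ₀}}` for the
uncountable separable linear orders: if `X` is a Sierpiński set of reals of
cardinality continuum (every continuous injection defined on a subset of `X`
into `X` differs from the identity on a set of size less than continuum), then
for any family `B` of uncountable suborders of `ℝ` with `|B| < |P(ℝ)|` there
is an uncountable suborder of `X` containing a copy of no member of `B`. -/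
theorem stmt_17 (hCH : Cardinal.continuum = Cardinal.aleph 1)
    (X : Set ℝ) (hXcard : #X = Cardinal.continuum)
    (hSier : ∀ (S : Set ℝ), S ⊆ X → ∀ g : ℝ → ℝ,
      ContinuousOn g S → Set.InjOn g S → Set.MapsTo g S X →
      #{a : ℝ | a ∈ S ∧ g a ≠ a} < Cardinal.continuum)
    (B : Set (Set ℝ)) (hB : ∀ Y ∈ B, ¬ Y.Countable)
    (hBcard : #B < 2 ^ Cardinal.continuum) :
    ∃ Z : Set ℝ, Z ⊆ X ∧ ¬ Z.Countable ∧
      ∀ Y ∈ B, ¬ Nonempty ((↥Y) ↪o (↥Z)) := by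
  have hCH₀ : continuum.{0} = ℵ₁ := lift_injective.{_, 0} (by simpa using hCH)
  have hX := isSierpinskiSet_of_continuum_eq_aleph_one hCH₀ hSier
  obtain ⟨A, hAX, hA, hAA⟩ := exists_almostDisjoint_family hXcard.ge
  by_contra! hbasis
  choose Y hYB hYA using fun F => hbasis (A F) (hAX F) (hA F)
  have hY : Injective fun F => (⟨Y F, hYB F⟩ : B) := by
    intro F G hFG
    by_contra hne
    obtain ⟨f⟩ := hYA F
    obtain ⟨g⟩ := hYA G
    rw [Subtype.mk.injEq] at hFG
    exact hX.not_countable_inter_of_orderEmbedding (hB _ (hYB G)) (hAX F) (hAX G) (hFG ▸ f) g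
      (hAA hne)
  refine hBcard.not_ge ?_
  calc 2 ^ 𝔠 = #((ω₁ : Ordinal.{0}).ToType → Bool) := by simp [hCH₀]
    _ ≤ #B := mk_le_of_injective hY
end
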